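/- Protocol ordering on the permutation network: for N ≥ 7 agents, seed set S₀ = {j}, and all indices with 3 ≤ i ≤ N−3 and j ∈ {2, …, i−2} ∪ {i+2, …, N−2}, the steady-state activation probabilities satisfy the strict inequalities ℙ^{𝒢_P, OR}(i) > ℙ^{G_C}(i) > ℙ^{𝒢_P, AND}(i), where ℙ^{𝒢_P, OR}(i) (respectively ℙ^{𝒢_P, AND}(i)) is the probability that agent i is active at steady state of the multiplex LTM on the duplex permutation network 𝒢_P with all agents using Protocol OR (respectively Protocol AND), and ℙ^{G_C}(i) is the corresponding probability on the monoplex cycle network G_C. Equivalently, in terms of the explicit formulas, (3/4)^{d} + (1/2)(3/4)^{N−d−3} − (1/2)(3/4)^{N−5} > (1/2)^{d} + (1/2)^{N−d} > (1/4)^{d} for d = |i−j|. -/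

import Mathlib

open MeasureTheory

inductive Protocol
  | OR
  | AND
deriving DecidableEq

noncomputable def ltmStep {n m : ℕ} (w : Fin m → Fin n → Fin n → ℝ)
    (u : Fin n → Protocol) (μ : Fin n → Fin m → ℝ)
    (A : Finset (Fin n)) : Finset (Fin n) :=
  A ∪ Finset.univ.filter fun i =>
    (u i = Protocol.OR ∧ ∃ k, μ i k < ∑ j ∈ A, w k i j) ∨
    (u i = Protocol.AND ∧ ∀ k, μ i k < ∑ j ∈ A, w k i j)

noncomputable def ltmSS {n m : ℕ} (w : Fin m → Fin n → Fin n → ℝ)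
    (u : Fin n → Protocol) (S₀ : Finset (Fin n))
    (μ : Fin n → Fin m → ℝ) : Finset (Fin n) :=
  (ltmStep w u μ)^[n] S₀

noncomputable def thMeasure (n m : ℕ) : Measure (Fin n → Fin m → ℝ) :=
  Measure.pi fun _ => Measure.pi fun _ => volume.restrict (Set.Icc (0:ℝ) 1)

noncomputable def pLTM {n m : ℕ} (w : Fin m → Fin n → Fin n → ℝ)
    (u : Fin n → Protocol) (S₀ : Finset (Fin n)) (i : Fin n) : ℝ :=
  (thMeasure n m {μ | i ∈ ltmSS w u S₀ μ}).toReal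

def lemStep {n m : ℕ} (S₀ : Finset (Fin n)) (u : Fin n → Protocol)
    (σ : Fin n → Fin m → Fin n) (A : Finset (Fin n)) : Finset (Fin n) :=
  S₀ ∪ A ∪ Finset.univ.filter fun i =>
    (u i = Protocol.OR ∧ ∃ k, σ i k ∈ A) ∨
    (u i = Protocol.AND ∧ ∀ k, σ i k ∈ A)

def UReachable {n m : ℕ} (S₀ : Finset (Fin n)) (u : Fin n → Protocol)
    (σ : Fin n → Fin m → Fin n) (i : Fin n) : Prop :=
  i ∈ (lemStep S₀ u σ)^[n] S₀

instance {n m : ℕ} (S₀ : Finset (Fin n)) (u : Fin n → Protocol)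
    (σ : Fin n → Fin m → Fin n) (i : Fin n) : Decidable (UReachable S₀ u σ i) := by
  unfold UReachable; infer_instance

noncomputable def rProb {n m : ℕ} (w : Fin m → Fin n → Fin n → ℝ)
    (S₀ : Finset (Fin n)) (u : Fin n → Protocol) (i : Fin n) : ℝ :=
  ∑ σ : Fin n → Fin m → Fin n,
    if UReachable S₀ u σ i then ∏ a : Fin n, ∏ k : Fin m, w k a (σ a k) else 0

noncomputable def casCen {n m : ℕ} (w : Fin m → Fin n → Fin n → ℝ)
    (u : Fin n → Protocol) (j : Fin n) : ℝ :=
  ∑ i : Fin n, pLTM w u {j} i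

noncomputable def pathW (N : ℕ) (i j : Fin N) : ℝ :=
  if j.val = i.val + 1 ∨ i.val = j.val + 1 then
    (if i.val = 0 ∨ i.val = N - 1 then 1 else 1/2)
  else 0

noncomputable def cycleW (N : ℕ) (i j : Fin N) : ℝ :=
  if (i.val + 1) % N = j.val ∨ (j.val + 1) % N = i.val then 1/2 else 0

noncomputable def permW2 (N : ℕ) (i j : Fin N) : ℝ :=
  if ((i.val + 1) % N = j.val ∨ (j.val + 1) % N = i.val) ∧
      ¬((i.val = N - 2 ∧ j.val = N - 1) ∨ (i.val = N - 1 ∧ j.val = N - 2)) then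
    (if i.val = N - 2 ∨ i.val = N - 1 then 1 else 1/2)
  else 0

/-!
Agents and layers are indexed from `0`: layer `0` of the permutation network is the path
`0 – 1 – ⋯ – (N-1)` (`pathW`), layer `1` the cycle without the edge `{N-2, N-1}` (`permW2`).

Every bound comes from comparing the activation event with product events in the independent
uniform thresholds. An agent reaches activation along a route from the seed as soon as each agent
on it has a threshold below the weight of its predecessor; conversely a set of agents that can
only see inactive neighbours of small total weight is never entered.

On the cycle `G_C` every weight is `1/2`. Agent `i` is active if all thresholds on one of the two
arcs from `j` to `i` are below `1/2`; and if the thresholds fail on both arcs and also elsewhere,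
two thresholds `≥ 1/2` enclose `i` away from `j`, which cuts `i` off. Hence
`(1/2)^d ≤ ℙ^{G_C}(i) ≤ (1/2)^d + (1/2)^(N-d) + (1/2)^(N-2)`.

On `𝒢_P` with protocol AND and `j < i`, an agent `c` of `(j, i]` with a threshold `≥ 1/2` in some
layer blocks the stretch `[c, N-2]`, so `ℙ^AND(i) ≤ (1/4)^d`. With protocol OR, `i` activates
along the direct route if every agent on it has a threshold below `1/2` in some layer
(probability `3/4`), or along the route `j, …, 0, N-1, N-2, …, i`, where `0` and `N-1` are
reached with weight `1` and `N-2` only in layer `0`. Inclusion–exclusion of these two events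
gives `ℙ^OR(i) ≥ (3/4)^d + ½ (3/4)^(N-d-3) − ½ (3/4)^(N-4)`.

The case `j > i` reduces to `j < i` by the reflection `x ↦ N-2-x` fixing `N-1`, which swaps the
two layers; the cycle reduces to seed `0` by a rotation or reflection. Estimates on powers then
order the bounds.
-/

open Finset

lemma sum_le_of_support_subsingleton {ι : Type*} {s : Finset ι} {f : ι → ℝ} {c : ℝ}
    (hc : 0 ≤ c) (hle : ∀ b ∈ s, f b ≤ c)
    (huniq : ∀ b ∈ s, ∀ b' ∈ s, f b ≠ 0 → f b' ≠ 0 → b = b') : ∑ b ∈ s, f b ≤ c := by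
  by_cases h : ∃ p ∈ s, f p ≠ 0
  · obtain ⟨p, hp, hfp⟩ := h
    rw [sum_eq_single_of_mem p hp fun b hb hbp =>
      by_contra fun hfb => hbp (huniq b hb p hp hfb hfp)]
    exact hle p hp
  · push Not at h
    rw [sum_eq_zero h]
    exact hc

lemma succ_mod_eq_iff {N a b : ℕ} (ha : a < N) (hb : b < N) :
    (a + 1) % N = b ↔ a + 1 = b ∨ a + 1 = N ∧ b = 0 := by
  rcases Nat.lt_or_ge (a + 1) N with h | h
  · rw [Nat.mod_eq_of_lt h]; omega
  · rw [show a + 1 = N by omega, Nat.mod_self]; omega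

lemma Fin.val_ofNat_of_lt_two_mul {N x : ℕ} [NeZero N] (hx : x < 2 * N) :
    (Fin.ofNat N x).val = if x < N then x else x - N := by
  rw [Fin.val_ofNat]
  split_ifs with h
  · exact Nat.mod_eq_of_lt h
  · rw [Nat.mod_eq_sub_mod (by omega), Nat.mod_eq_of_lt (by omega)]

section Dynamics

variable {n m : ℕ} {w : Fin m → Fin n → Fin n → ℝ} {u : Fin n → Protocol}
  {μ : Fin n → Fin m → ℝ} {S₀ A D : Finset (Fin n)} {a : Fin n}

def Activates (w : Fin m → Fin n → Fin n → ℝ) (u : Fin n → Protocol) (μ : Fin n → Fin m → ℝ)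
    (a : Fin n) (A : Finset (Fin n)) : Prop :=
  (u a = Protocol.OR ∧ ∃ k, μ a k < ∑ b ∈ A, w k a b) ∨
    (u a = Protocol.AND ∧ ∀ k, μ a k < ∑ b ∈ A, w k a b)

lemma mem_ltmStep : a ∈ ltmStep w u μ A ↔ a ∈ A ∨ Activates w u μ a A := by
  simp [ltmStep, Activates]

lemma activates_iff_of_monoplex {w : Fin 1 → Fin n → Fin n → ℝ} {μ : Fin n → Fin 1 → ℝ} :
    Activates w u μ a A ↔ μ a 0 < ∑ b ∈ A, w 0 a b := by
  rcases h : u a <;> simp [Activates, h, Fin.exists_fin_one, Fin.forall_fin_one]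

lemma activates_OR_of_lt_weight {k : Fin m} {p : Fin n} (hw : ∀ b, 0 ≤ w k a b) (hp : p ∈ A)
    (h : μ a k < w k a p) : Activates w (fun _ => Protocol.OR) μ a A :=
  Or.inl ⟨rfl, k, h.trans_le (single_le_sum (fun b _ => hw b) hp)⟩

lemma not_activates_AND {k : Fin m} (h : ∑ b ∈ A, w k a b ≤ μ a k) :
    ¬ Activates w (fun _ => Protocol.AND) μ a A := by
  rintro (⟨⟨⟩, -⟩ | ⟨-, hall⟩)
  exact (hall k).not_ge h

lemma monotone_iterate_ltmStep : Monotone fun t => (ltmStep w u μ)^[t] A :=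
  monotone_nat_of_le_succ fun t => by
    rw [Function.iterate_succ_apply']
    exact subset_union_left

lemma mem_ltmSS_of_chain (f : ℕ → Fin n) {d : ℕ} (hd : d ≤ n) (h0 : f 0 ∈ S₀)
    (hstep : ∀ r < d, ∀ A, f r ∈ A → Activates w u μ (f (r + 1)) A) :
    f d ∈ ltmSS w u S₀ μ := by
  have hreach : ∀ r ≤ d, f r ∈ (ltmStep w u μ)^[r] S₀ := by
    intro r hr
    induction r with
    | zero => exact h0
    | succ r ih =>
      rw [Function.iterate_succ_apply', mem_ltmStep]
      exact Or.inr (hstep r hr _ (ih (by omega)))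
  exact monotone_iterate_ltmStep hd (hreach d le_rfl)

lemma disjoint_ltmSS_of_barrier (hS₀ : Disjoint S₀ D)
    (hD : ∀ a ∈ D, ∀ A, Disjoint A D → ¬ Activates w u μ a A) :
    Disjoint (ltmSS w u S₀ μ) D := by
  suffices ∀ t, Disjoint ((ltmStep w u μ)^[t] S₀) D from this n
  intro t
  induction t with
  | zero => exact hS₀
  | succ t ih =>
    rw [Function.iterate_succ_apply', Finset.disjoint_left]
    intro a ha haD
    rcases mem_ltmStep.1 ha with ha | ha
    · exact Finset.disjoint_left.1 ih ha haD
    · exact hD a haD _ ih ha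

end Dynamics

section Relabel

variable {n m : ℕ} (w : Fin m → Fin n → Fin n → ℝ) (u : Fin n → Protocol)
  (e : Equiv.Perm (Fin n)) (τ : Equiv.Perm (Fin m))

lemma ltmStep_relabel (μ : Fin n → Fin m → ℝ) (A : Finset (Fin n)) :
    ltmStep (fun k a b => w (τ k) (e a) (e b)) (u ∘ e) (fun a k => μ (e a) (τ k))
        (A.map e.symm.toEmbedding) =
      (ltmStep w u μ A).map e.symm.toEmbedding := by
  ext a
  have hsum : ∀ k, ∑ b ∈ A.map e.symm.toEmbedding, w (τ k) (e a) (e b) =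
      ∑ b ∈ A, w (τ k) (e a) b := fun k => by simp [sum_map]
  simp only [mem_ltmStep, mem_map_equiv, Equiv.symm_symm, Activates, Function.comp_apply, hsum]
  exact or_congr_right (or_congr (and_congr_right fun _ => τ.exists_congr fun _ => Iff.rfl)
    (and_congr_right fun _ => τ.forall_congr fun _ => Iff.rfl))

lemma ltmSS_relabel (S₀ : Finset (Fin n)) (μ : Fin n → Fin m → ℝ) :
    ltmSS (fun k a b => w (τ k) (e a) (e b)) (u ∘ e) (S₀.map e.symm.toEmbedding)
        (fun a k => μ (e a) (τ k)) =
      (ltmSS w u S₀ μ).map e.symm.toEmbedding :=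
  ((Function.Semiconj.iterate_right (fun A => (ltmStep_relabel w u e τ μ A).symm) n) S₀).symm

-- Definitionally `μ ↦ fun a k => μ (e a) (τ k)`.
noncomputable def relabelThresholds : (Fin n → Fin m → ℝ) ≃ᵐ (Fin n → Fin m → ℝ) :=
  MeasurableEquiv.arrowCongr' e.symm (MeasurableEquiv.arrowCongr' τ.symm (MeasurableEquiv.refl ℝ))

lemma measurePreserving_relabelThresholds :
    MeasurePreserving (relabelThresholds e τ) (thMeasure n m) (thMeasure n m) :=
  measurePreserving_arrowCongr' _ _ _ _ fun _ =>
    measurePreserving_arrowCongr' _ _ _ _ fun _ => MeasurePreserving.id _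

lemma pLTM_relabel (S₀ : Finset (Fin n)) (i : Fin n) :
    pLTM (fun k a b => w (τ k) (e a) (e b)) (u ∘ e) (S₀.map e.symm.toEmbedding) i =
      pLTM w u S₀ (e i) := by
  unfold pLTM
  rw [← (measurePreserving_relabelThresholds e τ).measure_preimage_equiv]
  congr 2
  ext μ
  simp only [Set.mem_preimage, Set.mem_ofPred_eq]
  change i ∈ ltmSS _ _ _ (fun a k => μ (e a) (τ k)) ↔ _
  rw [ltmSS_relabel, mem_map_equiv, Equiv.symm_symm]

end Relabel

section Thresholds

instance : IsProbabilityMeasure (volume.restrict (Set.Icc (0 : ℝ) 1)) :=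
  ⟨by simp⟩

noncomputable abbrev agentLaw (m : ℕ) : Measure (Fin m → ℝ) :=
  Measure.pi fun _ => volume.restrict (Set.Icc (0 : ℝ) 1)

variable {n m : ℕ} {t : ℝ}

instance : IsProbabilityMeasure (thMeasure n m) := by
  unfold thMeasure; infer_instance

lemma thMeasure_real_forall_mem (C : Finset (Fin n)) (G : Fin n → Set (Fin m → ℝ)) :
    (thMeasure n m).real {μ | ∀ a ∈ C, μ a ∈ G a} = ∏ a ∈ C, (agentLaw m).real (G a) := by
  simp only [measureReal_def, ← ENNReal.toReal_prod]
  exact congrArg ENNReal.toReal (Measure.pi_pi_finset (fun _ => agentLaw m) G C)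

lemma ae_thresholds_mem_Ioo : ∀ᵐ μ ∂thMeasure n m, ∀ a k, μ a k ∈ Set.Ioo (0 : ℝ) 1 := by
  have hIoo : ∀ᵐ x ∂volume.restrict (Set.Icc (0 : ℝ) 1), x ∈ Set.Ioo 0 1 := by
    rw [← Measure.restrict_congr_set Ioo_ae_eq_Icc]
    exact ae_restrict_mem measurableSet_Ioo
  exact ae_all_iff.2 fun a =>
    (Measure.tendsto_eval_ae_ae (μ := fun _ : Fin n => agentLaw m) (i := a)).eventually <|
      ae_all_iff.2 fun k => Measure.tendsto_eval_ae_ae.eventually hIoo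

lemma restrict_Icc_real_Iio (h0 : 0 ≤ t) (h1 : t ≤ 1) :
    (volume.restrict (Set.Icc (0 : ℝ) 1)).real (Set.Iio t) = t := by
  have : Set.Iio t ∩ Set.Icc 0 1 = Set.Ico 0 t := by
    ext x; simp only [Set.mem_inter_iff, Set.mem_Iio, Set.mem_Icc, Set.mem_Ico]; grind
  rw [measureReal_restrict_apply measurableSet_Iio, this, Real.volume_real_Ico]
  simp [h0]

lemma restrict_Icc_real_Ici (h0 : 0 ≤ t) (h1 : t ≤ 1) :
    (volume.restrict (Set.Icc (0 : ℝ) 1)).real (Set.Ici t) = 1 - t := by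
  have : Set.Ici t ∩ Set.Icc 0 1 = Set.Icc t 1 := by
    ext x; simp only [Set.mem_inter_iff, Set.mem_Ici, Set.mem_Icc]; grind
  rw [measureReal_restrict_apply measurableSet_Ici, this, Real.volume_real_Icc]
  simp [h1]

lemma agentLaw_real_lt (k : Fin m) (h0 : 0 ≤ t) (h1 : t ≤ 1) :
    (agentLaw m).real {g | g k < t} = t :=
  .trans ((measurePreserving_eval (fun _ : Fin m => volume.restrict (Set.Icc (0 : ℝ) 1)) k
    ).measureReal_preimage measurableSet_Iio.nullMeasurableSet) (restrict_Icc_real_Iio h0 h1)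

lemma agentLaw_real_forall_lt (h0 : 0 ≤ t) (h1 : t ≤ 1) :
    (agentLaw m).real {g | ∀ k, g k < t} = t ^ m := by
  have : {g : Fin m → ℝ | ∀ k, g k < t} = Set.univ.pi fun _ => Set.Iio t := by ext; simp
  rw [this, measureReal_def, Measure.pi_pi, ENNReal.toReal_prod]
  simp_rw [← measureReal_def, restrict_Icc_real_Iio h0 h1]
  simp

lemma agentLaw_real_exists_lt (h0 : 0 ≤ t) (h1 : t ≤ 1) :
    (agentLaw m).real {g | ∃ k, g k < t} = 1 - (1 - t) ^ m := by
  have : {g : Fin m → ℝ | ∃ k, g k < t} = (Set.univ.pi fun _ => Set.Ici t)ᶜ := by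
    ext; simp [Pi.le_def]
  rw [this, measureReal_compl (MeasurableSet.univ_pi fun _ => measurableSet_Ici), probReal_univ,
    measureReal_def, Measure.pi_pi, ENNReal.toReal_prod]
  simp_rw [← measureReal_def, restrict_Icc_real_Ici h0 h1]
  simp

variable {w : Fin m → Fin n → Fin n → ℝ} {u : Fin n → Protocol} {S₀ : Finset (Fin n)}
  {i : Fin n} {E : Set (Fin n → Fin m → ℝ)}

lemma le_pLTM_of_ae (hE : ∀ᵐ μ ∂thMeasure n m, μ ∈ E → i ∈ ltmSS w u S₀ μ) :
    (thMeasure n m).real E ≤ pLTM w u S₀ i :=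
  ENNReal.toReal_mono (measure_ne_top _ _) (measure_mono_ae hE)

lemma pLTM_le_of_ae (hE : ∀ᵐ μ ∂thMeasure n m, i ∈ ltmSS w u S₀ μ → μ ∈ E) :
    pLTM w u S₀ i ≤ (thMeasure n m).real E :=
  ENNReal.toReal_mono (measure_ne_top _ _) (measure_mono_ae hE)

end Thresholds
section Cycle

variable {N : ℕ} {a b : Fin N}

lemma cycleW_nonneg : 0 ≤ cycleW N a b := by
  unfold cycleW; split_ifs <;> norm_num

lemma cycleW_le_half : cycleW N a b ≤ 1 / 2 := by
  unfold cycleW; split_ifs <;> norm_num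

lemma cycleW_of_val_eq_succ (h : a.val = b.val + 1) : cycleW N a b = 1 / 2 :=
  if_pos (Or.inr ((succ_mod_eq_iff b.isLt a.isLt).2 (Or.inl h.symm)))

lemma cycleW_ne_zero (h : cycleW N a b ≠ 0) :
    a.val + 1 = b.val ∨ b.val + 1 = a.val ∨ a.val + 1 = N ∧ b.val = 0 ∨
      b.val + 1 = N ∧ a.val = 0 := by
  unfold cycleW at h
  split_ifs at h with hab
  · rw [succ_mod_eq_iff a.isLt b.isLt, succ_mod_eq_iff b.isLt a.isLt] at hab
    tauto
  · exact absurd rfl h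

lemma cycleW_eq_ite [NeZero N] (a b : Fin N) :
    cycleW N a b = if a + 1 = b ∨ b + 1 = a then 1 / 2 else 0 := by
  simp only [cycleW, Fin.ext_iff, Fin.val_add, Fin.val_one', Nat.add_mod_mod]

lemma cycleW_add_left [NeZero N] (c a b : Fin N) : cycleW N (c + a) (c + b) = cycleW N a b := by
  simp only [cycleW_eq_ite, add_assoc, add_right_inj]

lemma cycleW_sub_left [NeZero N] (c a b : Fin N) : cycleW N (c - a) (c - b) = cycleW N a b := by
  have h : ∀ x y : Fin N, c - x + 1 = c - y ↔ y + 1 = x := fun x y => by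
    rw [sub_add_eq_add_sub, sub_eq_sub_iff_add_eq_add, add_right_comm, add_assoc, add_right_inj]
  simp only [cycleW_eq_ite, h, or_comm]

variable [NeZero N] {u : Fin N → Protocol} {μ : Fin N → Fin 1 → ℝ}

lemma pLTM_cycle_eq_seed_zero (u : Fin N → Protocol) (i j : Fin N) :
    ∃ (u' : Fin N → Protocol) (t : Fin N), t.val = Nat.dist i.val j.val ∧
      pLTM (fun _ : Fin 1 => cycleW N) u {j} i = pLTM (fun _ : Fin 1 => cycleW N) u' {0} t := by
  rcases le_total j i with h | h
  · refine ⟨u ∘ Equiv.addLeft j, i - j, ?_, ?_⟩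
    · rw [Fin.coe_sub_iff_le.2 h, Nat.dist_eq_sub_of_le_right (Fin.le_def.1 h)]
    · simpa [cycleW_add_left] using
        (pLTM_relabel (fun _ => cycleW N) u (Equiv.addLeft j) (Equiv.refl _) {j} (i - j)).symm
  · refine ⟨u ∘ Equiv.subLeft j, j - i, ?_, ?_⟩
    · rw [Fin.coe_sub_iff_le.2 h, Nat.dist_eq_sub_of_le (Fin.le_def.1 h)]
    · simpa [cycleW_sub_left] using
        (pLTM_relabel (fun _ => cycleW N) u (Equiv.subLeft j) (Equiv.refl _) {j} (j - i)).symm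

lemma mem_ltmSS_cycle_zero_of_lt_half {t : Fin N} (hμ : ∀ a ∈ Ioc 0 t, μ a 0 < 1 / 2) :
    t ∈ ltmSS (fun _ : Fin 1 => cycleW N) u {0} μ := by
  have hval : ∀ r < N, (Fin.ofNat N r).val = r := fun r hr => by
    rw [Fin.val_ofNat, Nat.mod_eq_of_lt hr]
  have hchain := mem_ltmSS_of_chain (w := fun _ : Fin 1 => cycleW N) (u := u) (μ := μ)
    (S₀ := {0}) (Fin.ofNat N) t.isLt.le (by simp) fun r hr A hrA => by
      rw [activates_iff_of_monoplex]
      calc μ (Fin.ofNat N (r + 1)) 0 < 1 / 2 := hμ _ (by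
            simp only [mem_Ioc, Fin.lt_def, Fin.le_def, Fin.val_zero, hval (r + 1) (by omega)]
            omega)
        _ = cycleW N (Fin.ofNat N (r + 1)) (Fin.ofNat N r) :=
          (cycleW_of_val_eq_succ (by rw [hval _ (by omega), hval _ (by omega)])).symm
        _ ≤ _ := single_le_sum (f := cycleW N _) (fun _ _ => cycleW_nonneg) hrA
  rwa [show Fin.ofNat N t.val = t from Fin.ext (hval _ t.isLt)] at hchain

lemma half_pow_le_pLTM_cycle_zero (u : Fin N → Protocol) (t : Fin N) :
    (1 / 2 : ℝ) ^ t.val ≤ pLTM (fun _ : Fin 1 => cycleW N) u {0} t :=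
  calc (1 / 2 : ℝ) ^ t.val
      = (thMeasure N 1).real {μ | ∀ a ∈ Ioc 0 t, μ a ∈ {g : Fin 1 → ℝ | g 0 < 1 / 2}} := by
        rw [thMeasure_real_forall_mem, prod_const, agentLaw_real_lt 0 (by norm_num) (by norm_num),
          Fin.card_Ioc, Fin.val_zero, Nat.sub_zero]
    _ ≤ _ := le_pLTM_of_ae <| .of_forall fun _ => mem_ltmSS_cycle_zero_of_lt_half

lemma disjoint_ltmSS_cycle_Icc {x y : Fin N} (hx : 0 < x.val) (hxy : x.val < y.val)
    (hμ : ∀ a k, 0 ≤ μ a k) (hμx : 1 / 2 ≤ μ x 0) (hμy : 1 / 2 ≤ μ y 0) :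
    Disjoint (ltmSS (fun _ : Fin 1 => cycleW N) u {0} μ) (Icc x y) := by
  have hmem : ∀ c : Fin N, c ∈ Finset.Icc x y ↔ x.val ≤ c.val ∧ c.val ≤ y.val := fun c => by
    simp only [Finset.mem_Icc, Fin.le_def]
  refine disjoint_ltmSS_of_barrier (Finset.disjoint_singleton_left.2 fun h => by
    rw [hmem, Fin.val_zero] at h; omega) fun a ha A hA => ?_
  rw [activates_iff_of_monoplex, not_lt]
  have hout : ∀ b ∈ A, ¬ (x.val ≤ b.val ∧ b.val ≤ y.val) := fun b hb =>
    (hmem b).not.1 (disjoint_left.1 hA hb)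
  rw [hmem] at ha
  refine sum_le_of_support_subsingleton (hμ a 0) (fun b hb => ?_) fun b hb b' hb' hw hw' => ?_
  · by_cases hw : cycleW N a b = 0
    · exact hw ▸ hμ a 0
    · have hend : a = x ∨ a = y := by
        have := cycleW_ne_zero hw; have := hout b hb
        simp only [Fin.ext_iff]; omega
      rcases hend with rfl | rfl <;> linarith [cycleW_le_half (N := N) (a := a) (b := b)]
  · have := cycleW_ne_zero hw; have := cycleW_ne_zero hw'
    have := hout b hb; have := hout b' hb'
    ext; omega

lemma cycle_arc_lt_half_of_mem_ltmSS {t : Fin N} (ht : 0 < t.val) (hμ : ∀ a k, 0 ≤ μ a k)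
    (hact : t ∈ ltmSS (fun _ : Fin 1 => cycleW N) u {0} μ) :
    (∀ a ∈ Ioc 0 t, μ a 0 < 1 / 2) ∨ (∀ a ∈ Ici t, μ a 0 < 1 / 2) ∨
      ∀ a ∈ (Ioi 0).erase t, μ a 0 < 1 / 2 := by
  by_contra! h
  obtain ⟨⟨γ, hγ, hγμ⟩, ⟨δ, hδ, hδμ⟩, ⟨ε, hε, hεμ⟩⟩ := h
  have blocked : ∀ x y : Fin N, 0 < x.val → x.val < y.val → 1 / 2 ≤ μ x 0 → 1 / 2 ≤ μ y 0 →
      x.val ≤ t.val → t.val ≤ y.val → False := fun x y hx hxy hμx hμy hxt hty =>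
    disjoint_left.1 (disjoint_ltmSS_cycle_Icc hx hxy hμ hμx hμy) hact
      (by simp only [Finset.mem_Icc, Fin.le_def]; omega)
  simp only [mem_Ioc, mem_Ici, mem_erase, mem_Ioi, Fin.lt_def, Fin.le_def, Fin.val_zero, ne_eq,
    Fin.ext_iff] at hγ hδ hε
  rcases Nat.lt_or_ge γ.val δ.val with hγδ | hγδ
  · exact blocked γ δ hγ.1 hγδ hγμ hδμ hγ.2 hδ
  · obtain rfl : γ = t := Fin.ext (by omega)
    rcases Nat.lt_or_gt_of_ne hε.1 with hεt | hεt
    · exact blocked ε γ hε.2 hεt hεμ hγμ hεt.le le_rfl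
    · exact blocked γ ε hγ.1 hεt hγμ hεμ le_rfl hεt.le

lemma pLTM_cycle_zero_le (u : Fin N → Protocol) {t : Fin N} (ht : 0 < t.val) :
    pLTM (fun _ : Fin 1 => cycleW N) u {0} t ≤
      (1 / 2 : ℝ) ^ t.val + (1 / 2 : ℝ) ^ (N - t.val) + (1 / 2 : ℝ) ^ (N - 2) := by
  let X : Finset (Fin N) → Set (Fin N → Fin 1 → ℝ) := fun C =>
    {μ | ∀ a ∈ C, μ a ∈ {g : Fin 1 → ℝ | g 0 < 1 / 2}}
  have hX : ∀ C, (thMeasure N 1).real (X C) = (1 / 2 : ℝ) ^ #C := fun C => by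
    rw [thMeasure_real_forall_mem, prod_const, agentLaw_real_lt 0 (by norm_num) (by norm_num)]
  calc pLTM (fun _ : Fin 1 => cycleW N) u {0} t
      ≤ (thMeasure N 1).real (X (Ioc 0 t) ∪ X (Ici t) ∪ X ((Ioi 0).erase t)) :=
        pLTM_le_of_ae <| ae_thresholds_mem_Ioo.mono fun μ hμ hact => by
          simpa [X, or_assoc] using
            cycle_arc_lt_half_of_mem_ltmSS ht (fun a k => (hμ a k).1.le) hact
    _ ≤ (thMeasure N 1).real (X (Ioc 0 t)) + (thMeasure N 1).real (X (Ici t)) +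
          (thMeasure N 1).real (X ((Ioi 0).erase t)) :=
        (measureReal_union_le _ _).trans (add_le_add_left (measureReal_union_le _ _) _)
    _ = _ := by
      rw [hX, hX, hX, Fin.card_Ioc, Fin.card_Ici,
        card_erase_of_mem (by rw [mem_Ioi, Fin.lt_def, Fin.val_zero]; omega), Fin.card_Ioi,
        Fin.val_zero]
      rfl

lemma pLTM_cycle_bounds (u : Fin N → Protocol) {i j : Fin N} (hij : i ≠ j) :
    (1 / 2 : ℝ) ^ Nat.dist i.val j.val ≤ pLTM (fun _ : Fin 1 => cycleW N) u {j} i ∧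
      pLTM (fun _ : Fin 1 => cycleW N) u {j} i ≤
        (1 / 2 : ℝ) ^ Nat.dist i.val j.val + (1 / 2 : ℝ) ^ (N - Nat.dist i.val j.val) +
          (1 / 2 : ℝ) ^ (N - 2) := by
  obtain ⟨u', t, ht, heq⟩ := pLTM_cycle_eq_seed_zero u i j
  rw [heq, ← ht]
  have hpos : 0 < t.val := by
    rw [ht, Nat.dist]; have := Fin.val_ne_of_ne hij; omega
  exact ⟨half_pow_le_pLTM_cycle_zero u' t, pLTM_cycle_zero_le u' hpos⟩

end Cycle

section PermutationNetwork

variable {N : ℕ} {a b : Fin N}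

noncomputable abbrev permNet (N : ℕ) : Fin 2 → Fin N → Fin N → ℝ :=
  fun k => if k = 0 then pathW N else permW2 N

lemma pathW_nonneg : 0 ≤ pathW N a b := by
  unfold pathW; split_ifs <;> norm_num

lemma pathW_ne_zero (h : pathW N a b ≠ 0) : b.val = a.val + 1 ∨ a.val = b.val + 1 := by
  by_contra hab
  exact h (if_neg hab)

lemma pathW_le_half (h0 : a.val ≠ 0) (h1 : a.val + 1 ≠ N) : pathW N a b ≤ 1 / 2 := by
  unfold pathW; split_ifs <;> first | omega | norm_num

lemma pathW_of_interior (h0 : a.val ≠ 0) (h1 : a.val + 1 ≠ N)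
    (hab : b.val = a.val + 1 ∨ a.val = b.val + 1) : pathW N a b = 1 / 2 := by
  unfold pathW; rw [if_pos hab, if_neg (by omega)]

lemma pathW_zero_one (ha : a.val = 0) (hb : b.val = 1) : pathW N a b = 1 := by
  unfold pathW; rw [if_pos (by omega), if_pos (by omega)]

lemma permW2_eq_ite :
    permW2 N a b =
      if ((a.val + 1 = b.val ∨ a.val + 1 = N ∧ b.val = 0) ∨
          (b.val + 1 = a.val ∨ b.val + 1 = N ∧ a.val = 0)) ∧
          ¬((a.val = N - 2 ∧ b.val = N - 1) ∨ (a.val = N - 1 ∧ b.val = N - 2)) then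
        (if a.val = N - 2 ∨ a.val = N - 1 then 1 else 1 / 2)
      else 0 := by
  simp only [permW2, succ_mod_eq_iff a.isLt b.isLt, succ_mod_eq_iff b.isLt a.isLt]

lemma permW2_nonneg : 0 ≤ permW2 N a b := by
  unfold permW2; split_ifs <;> norm_num

lemma permW2_ne_zero (h : permW2 N a b ≠ 0) :
    ((a.val + 1 = b.val ∨ a.val + 1 = N ∧ b.val = 0) ∨
      (b.val + 1 = a.val ∨ b.val + 1 = N ∧ a.val = 0)) ∧
      ¬((a.val = N - 2 ∧ b.val = N - 1) ∨ (a.val = N - 1 ∧ b.val = N - 2)) := by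
  by_contra hab
  exact h (by rw [permW2_eq_ite, if_neg hab])

lemma permW2_le_half (ha : a.val + 2 < N) : permW2 N a b ≤ 1 / 2 := by
  rw [permW2_eq_ite]; split_ifs <;> first | omega | norm_num

lemma permW2_of_interior (ha : a.val + 3 ≤ N) (hab : b.val = a.val + 1 ∨ a.val = b.val + 1) :
    permW2 N a b = 1 / 2 := by
  rw [permW2_eq_ite, if_pos (by omega), if_neg (by omega)]

lemma permW2_last_zero (hN : 3 ≤ N) (ha : a.val + 1 = N) (hb : b.val = 0) : permW2 N a b = 1 := by
  rw [permW2_eq_ite, if_pos (by omega), if_pos (by omega)]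

def permFlip (N : ℕ) : Equiv.Perm (Fin N) :=
  Function.Involutive.toPerm
    (fun a => ⟨if a.val + 1 = N then a.val else N - 2 - a.val, by split_ifs <;> omega⟩)
    fun a => Fin.ext (by dsimp only; split_ifs <;> omega)

lemma permFlip_val (a : Fin N) :
    (permFlip N a).val = if a.val + 1 = N then a.val else N - 2 - a.val := rfl

lemma permFlip_val_of_add_two_le (ha : a.val + 2 ≤ N) :
    (permFlip N a).val = N - 2 - a.val := by
  rw [permFlip_val, if_neg (by omega)]

lemma permFlip_permFlip (a : Fin N) : permFlip N (permFlip N a) = a :=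
  Function.Involutive.toPerm_involutive _ a

lemma pathW_permFlip (hN : 3 ≤ N) (a b : Fin N) :
    pathW N (permFlip N a) (permFlip N b) = permW2 N a b := by
  rw [permW2_eq_ite]
  unfold pathW
  simp only [permFlip_val]
  have := a.isLt; have := b.isLt
  split_ifs <;> first | rfl | omega

lemma permW2_permFlip (hN : 3 ≤ N) (a b : Fin N) :
    permW2 N (permFlip N a) (permFlip N b) = pathW N a b := by
  conv_rhs => rw [← permFlip_permFlip a, ← permFlip_permFlip b]
  exact (pathW_permFlip hN _ _).symm

lemma permNet_swap_permFlip (hN : 3 ≤ N) (k : Fin 2) (a b : Fin N) :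
    permNet N (Equiv.swap 0 1 k) (permFlip N a) (permFlip N b) = permNet N k a b := by
  fin_cases k <;> simp [permNet, pathW_permFlip hN, permW2_permFlip hN]

lemma pLTM_permNet_permFlip (hN : 3 ≤ N) (p : Protocol) (i j : Fin N) :
    pLTM (permNet N) (fun _ => p) {j} i =
      pLTM (permNet N) (fun _ => p) {permFlip N j} (permFlip N i) := by
  have := pLTM_relabel (permNet N) (fun _ => p) (permFlip N) (Equiv.swap 0 1) {permFlip N j} i
  simpa [permNet_swap_permFlip hN, permFlip_permFlip, Function.comp_def] using this

variable {μ : Fin N → Fin 2 → ℝ} {A : Finset (Fin N)} {i j : Fin N}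

lemma disjoint_ltmSS_permNet_AND {c : Fin N} {k : Fin 2} (hjc : j.val < c.val)
    (hc : c.val + 3 ≤ N) (hμ : ∀ a k, 0 ≤ μ a k) (hμc : 1 / 2 ≤ μ c k) :
    Disjoint (ltmSS (permNet N) (fun _ => Protocol.AND) {j} μ)
      (univ.filter fun a => c.val ≤ a.val ∧ a.val + 2 ≤ N) := by
  refine disjoint_ltmSS_of_barrier (by simp; omega) fun a ha A hA => ?_
  have hout : ∀ b ∈ A, ¬ (c.val ≤ b.val ∧ b.val + 2 ≤ N) := fun b hb hbD =>
    disjoint_left.1 hA hb (by simpa using hbD)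
  simp only [mem_filter, mem_univ, true_and] at ha
  rcases Nat.lt_or_ge c.val a.val with hca | hca
  · rcases Nat.lt_or_ge (a.val + 2) N with haN | haN
    · refine not_activates_AND (k := 0) ((sum_eq_zero fun b hb => ?_).trans_le (hμ a 0))
      by_contra hw
      have := pathW_ne_zero hw; have := hout b hb; omega
    · refine not_activates_AND (k := 1) ((sum_eq_zero fun b hb => ?_).trans_le (hμ a 1))
      by_contra hw
      have := permW2_ne_zero hw; have := hout b hb; omega
  · obtain rfl : a = c := Fin.ext (by omega)
    refine not_activates_AND (k := k) (sum_le_of_support_subsingleton (hμ a k) (fun b _ => ?_)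
      fun b hb b' hb' hw hw' => ?_)
    · refine le_trans ?_ hμc
      fin_cases k
      · exact pathW_le_half (by omega) (by omega)
      · exact permW2_le_half (by omega)
    · have := hout b hb; have := hout b' hb'
      fin_cases k
      · have := pathW_ne_zero hw; have := pathW_ne_zero hw'; ext; omega
      · have := permW2_ne_zero hw; have := permW2_ne_zero hw'; ext; omega

lemma pLTM_permNet_AND_le (hi : i.val + 3 ≤ N) :
    pLTM (permNet N) (fun _ => Protocol.AND) {j} i ≤ (1 / 4 : ℝ) ^ (i.val - j.val) := by
  calc pLTM (permNet N) (fun _ => Protocol.AND) {j} i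
      ≤ (thMeasure N 2).real {μ | ∀ a ∈ Ioc j i, μ a ∈ {g : Fin 2 → ℝ | ∀ k, g k < 1 / 2}} :=
        pLTM_le_of_ae <| ae_thresholds_mem_Ioo.mono fun μ hμ hact a ha k => by
          by_contra! hk
          rw [mem_Ioc, Fin.lt_def, Fin.le_def] at ha
          exact disjoint_left.1 (disjoint_ltmSS_permNet_AND ha.1 (by omega)
            (fun a k => (hμ a k).1.le) hk) hact (by simp; omega)
    _ = (1 / 4 : ℝ) ^ (i.val - j.val) := by
        rw [thMeasure_real_forall_mem, prod_const, agentLaw_real_forall_lt (by norm_num)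
          (by norm_num), Fin.card_Ioc]
        norm_num

lemma pLTM_permNet_AND_le_dist (hN : 3 ≤ N) (hi1 : 0 < i.val) (hi2 : i.val + 3 ≤ N)
    (hj : j.val + 2 ≤ N) :
    pLTM (permNet N) (fun _ => Protocol.AND) {j} i ≤ (1 / 4 : ℝ) ^ Nat.dist i.val j.val := by
  rcases le_total j.val i.val with h | h
  · rw [Nat.dist_eq_sub_of_le_right h]
    exact pLTM_permNet_AND_le hi2
  · rw [Nat.dist_eq_sub_of_le h, pLTM_permNet_permFlip hN]
    have hi := permFlip_val_of_add_two_le (a := i) (by omega)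
    have := pLTM_permNet_AND_le (j := permFlip N j) (i := permFlip N i) (by omega)
    rwa [hi, permFlip_val_of_add_two_le hj,
      show N - 2 - i.val - (N - 2 - j.val) = j.val - i.val by omega] at this

lemma activates_permNet_OR_of_interior {x p : Fin N} (hx0 : x.val ≠ 0) (hx : x.val + 3 ≤ N)
    (hadj : p.val = x.val + 1 ∨ x.val = p.val + 1) (hp : p ∈ A) (hμ : ∃ k, μ x k < 1 / 2) :
    Activates (permNet N) (fun _ => Protocol.OR) μ x A := by
  obtain ⟨k, hk⟩ := hμ
  fin_cases k
  · exact activates_OR_of_lt_weight (k := 0) (fun _ => pathW_nonneg) hp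
      (hk.trans_eq (pathW_of_interior hx0 (by omega) hadj).symm)
  · exact activates_OR_of_lt_weight (k := 1) (fun _ => permW2_nonneg) hp
      (hk.trans_eq (permW2_of_interior hx hadj).symm)

def relayEvent (z : Fin N) (C : Finset (Fin N)) : Set (Fin N → Fin 2 → ℝ) :=
  {μ | ∀ a ∈ C, μ a ∈ if a = z then {g | g 0 < 1 / 2} else {g | ∃ k, g k < 1 / 2}}

lemma relayEvent_inter (z : Fin N) (C C' : Finset (Fin N)) :
    relayEvent z C ∩ relayEvent z C' = relayEvent z (C ∪ C') := by
  ext μ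
  simp only [relayEvent, Set.mem_inter_iff, Set.mem_ofPred_eq, forall_mem_union]

lemma measurableSet_relayEvent (z : Fin N) (C : Finset (Fin N)) :
    MeasurableSet (relayEvent z C) := by
  refine MeasurableSet.pi (Finset.countable_toSet _) fun a _ => ?_
  split_ifs
  · exact measurableSet_lt (measurable_pi_apply 0) measurable_const
  · simp only [Set.ofPred_exists]
    exact .iUnion fun k => measurableSet_lt (measurable_pi_apply k) measurable_const

lemma thMeasure_real_relayEvent_of_mem {z : Fin N} {C : Finset (Fin N)} (hz : z ∈ C) :
    (thMeasure N 2).real (relayEvent z C) = 1 / 2 * (3 / 4) ^ (#C - 1) := by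
  rw [relayEvent, thMeasure_real_forall_mem, ← mul_prod_erase C _ hz, if_pos rfl,
    prod_congr rfl fun a ha => by rw [if_neg (ne_of_mem_erase ha)], prod_const,
    card_erase_of_mem hz, agentLaw_real_lt 0 (by norm_num) (by norm_num),
    agentLaw_real_exists_lt (by norm_num) (by norm_num)]
  norm_num

lemma thMeasure_real_relayEvent_of_notMem {z : Fin N} {C : Finset (Fin N)} (hz : z ∉ C) :
    (thMeasure N 2).real (relayEvent z C) = (3 / 4) ^ #C := by
  rw [relayEvent, thMeasure_real_forall_mem,
    prod_congr rfl fun a ha => by rw [if_neg (ne_of_mem_of_not_mem ha hz)], prod_const,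
    agentLaw_real_exists_lt (by norm_num) (by norm_num)]
  norm_num

variable [NeZero N]

lemma mem_ltmSS_permNet_OR_of_direct (hji : j.val < i.val) (hi : i.val + 3 ≤ N)
    (hμ : ∀ a ∈ Ioc j i, ∃ k, μ a k < 1 / 2) :
    i ∈ ltmSS (permNet N) (fun _ => Protocol.OR) {j} μ := by
  have hval : ∀ r ≤ i.val - j.val, (Fin.ofNat N (j.val + r)).val = j.val + r := fun r hr => by
    rw [Fin.val_ofNat, Nat.mod_eq_of_lt (by omega)]
  have hchain := mem_ltmSS_of_chain (S₀ := {j}) (fun r => Fin.ofNat N (j.val + r))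
    (d := i.val - j.val) (by omega) (by simp)
    fun r hr A hA => by
      have h1 := hval (r + 1) hr; have h0 := hval r (by omega)
      refine activates_permNet_OR_of_interior (by omega) (by omega) (by omega) hA (hμ _ ?_)
      simp only [mem_Ioc, Fin.lt_def, Fin.le_def]; omega
  rwa [show Fin.ofNat N (j.val + (i.val - j.val)) = i from Fin.ext (by rw [hval _ le_rfl]; omega)]
    at hchain

lemma mem_ltmSS_permNet_OR_of_wrap (hN : 3 ≤ N) (hji : j.val < i.val) (hi : i.val + 3 ≤ N)
    (hlt : ∀ a k, μ a k < 1)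
    (hμ : ∀ a : Fin N, (0 < a.val ∧ a.val < j.val) ∨ (i.val ≤ a.val ∧ a.val + 3 ≤ N) →
      ∃ k, μ a k < 1 / 2)
    (hz : ∀ a : Fin N, a.val + 2 = N → μ a 0 < 1 / 2) :
    i ∈ ltmSS (permNet N) (fun _ => Protocol.OR) {j} μ := by
  have hval : ∀ r ≤ j.val + N - i.val, (Fin.ofNat N (j.val + N - r)).val =
      if r ≤ j.val then j.val - r else j.val + N - r := fun r hr => by
    rw [Fin.val_ofNat_of_lt_two_mul (by omega)]
    split_ifs <;> omega
  have hchain := mem_ltmSS_of_chain (S₀ := {j}) (fun r => Fin.ofNat N (j.val + N - r))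
    (d := j.val + N - i.val) (by omega) (by simp [Fin.ext_iff, Nat.mod_eq_of_lt j.isLt])
    fun r hr A hA => by
      have hx := hval (r + 1) hr; have hp := hval r (by omega)
      set x := Fin.ofNat N (j.val + N - (r + 1))
      set p := Fin.ofNat N (j.val + N - r)
      rcases Nat.lt_or_ge (r + 1) j.val with h | h
      · rw [if_pos (by omega)] at hx hp
        exact activates_permNet_OR_of_interior (by omega) (by omega) (by omega) hA
          (hμ x (Or.inl (by omega)))
      obtain h | h | h | h : r + 1 = j.val ∨ r = j.val ∨ r = j.val + 1 ∨ j.val + 2 ≤ r := by omega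
      · rw [if_pos (by omega)] at hx hp
        exact activates_OR_of_lt_weight (k := 0) (fun _ => pathW_nonneg) hA
          ((hlt x 0).trans_eq (pathW_zero_one (by omega) (by omega)).symm)
      · rw [if_neg (by omega)] at hx
        rw [if_pos (by omega)] at hp
        exact activates_OR_of_lt_weight (k := 1) (fun _ => permW2_nonneg) hA
          ((hlt x 1).trans_eq (permW2_last_zero hN (by omega) (by omega)).symm)
      · rw [if_neg (by omega)] at hx hp
        exact activates_OR_of_lt_weight (k := 0) (fun _ => pathW_nonneg) hA
          ((hz x (by omega)).trans_eq (pathW_of_interior (by omega) (by omega) (by omega)).symm)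
      · rw [if_neg (by omega)] at hx hp
        exact activates_permNet_OR_of_interior (by omega) (by omega) (by omega) hA
          (hμ x (Or.inr (by omega)))
  rwa [show Fin.ofNat N (j.val + N - (j.val + N - i.val)) = i from
    Fin.ext (by rw [Fin.val_ofNat, Nat.mod_eq_of_lt (by omega)]; omega)] at hchain

lemma mem_ltmSS_permNet_OR_of_mem_relayEvent (hN : 3 ≤ N) (hji : j.val < i.val) (hi : i.val + 3 ≤ N)
    {z : Fin N} (hz : z.val = N - 2) (hlt : ∀ a k, μ a k < 1)
    (hμ : μ ∈ relayEvent z (Ioc j i) ∪ relayEvent z (Ioo 0 j ∪ Icc i z)) :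
    i ∈ ltmSS (permNet N) (fun _ => Protocol.OR) {j} μ := by
  rcases hμ with hμ | hμ
  · refine mem_ltmSS_permNet_OR_of_direct hji hi fun a ha => ?_
    have haz : a ≠ z := by
      rw [mem_Ioc, Fin.lt_def, Fin.le_def] at ha; rw [Ne, Fin.ext_iff]; omega
    simpa [haz] using hμ a ha
  · refine mem_ltmSS_permNet_OR_of_wrap hN hji hi hlt (fun a ha => ?_) fun a ha => ?_
    · have hmem : a ∈ Ioo 0 j ∪ Icc i z := by
        simp only [mem_union, mem_Ioo, mem_Icc, Fin.lt_def, Fin.le_def, Fin.val_zero]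
        omega
      have haz : a ≠ z := by rw [Ne, Fin.ext_iff]; omega
      simpa [haz] using hμ a hmem
    · rw [show a = z from Fin.ext (by omega)]
      simpa using hμ z (mem_union_right _ (by simp only [mem_Icc, Fin.le_def]; omega))

lemma le_pLTM_permNet_OR_of_lt (hN : 3 ≤ N) (hj : 0 < j.val) (hji : j.val < i.val)
    (hi : i.val + 3 ≤ N) :
    (3 / 4 : ℝ) ^ (i.val - j.val) + 1 / 2 * (3 / 4 : ℝ) ^ (N - (i.val - j.val) - 3) -
        1 / 2 * (3 / 4 : ℝ) ^ (N - 4) ≤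
      pLTM (permNet N) (fun _ => Protocol.OR) {j} i := by
  set z : Fin N := ⟨N - 2, by omega⟩
  have hz : z.val = N - 2 := rfl
  have hX : (thMeasure N 2).real (relayEvent z (Ioc j i)) = (3 / 4) ^ (i.val - j.val) := by
    rw [thMeasure_real_relayEvent_of_notMem (by simp only [mem_Ioc, Fin.le_def]; omega),
      Fin.card_Ioc]
  have hdisj : Disjoint (Ioo 0 j) (Icc i z) := disjoint_left.2 fun a h1 h2 => by
    rw [mem_Ioo, Fin.lt_def, Fin.lt_def] at h1
    rw [mem_Icc, Fin.le_def, Fin.le_def] at h2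
    omega
  have hY : (thMeasure N 2).real (relayEvent z (Ioo 0 j ∪ Icc i z)) =
      1 / 2 * (3 / 4) ^ (N - (i.val - j.val) - 3) := by
    rw [thMeasure_real_relayEvent_of_mem (mem_union_right _ (by
      simp only [mem_Icc, Fin.le_def]; omega)), card_union_of_disjoint hdisj, Fin.card_Ioo,
      Fin.card_Icc, Fin.val_zero]
    congr 2
    omega
  have hunion : Ioc j i ∪ (Ioo 0 j ∪ Icc i z) = (Ioo 0 ⟨N - 1, by omega⟩).erase j := by
    ext a
    simp only [mem_union, mem_Ioc, mem_Ioo, mem_Icc, mem_erase, Fin.lt_def, Fin.le_def,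
      Fin.val_zero, ne_eq, Fin.ext_iff]
    omega
  have hXY : (thMeasure N 2).real (relayEvent z (Ioc j i) ∩ relayEvent z (Ioo 0 j ∪ Icc i z)) =
      1 / 2 * (3 / 4) ^ (N - 4) := by
    rw [relayEvent_inter, hunion, thMeasure_real_relayEvent_of_mem (by
      simp only [mem_erase, mem_Ioo, Fin.lt_def, Fin.val_zero, ne_eq, Fin.ext_iff]; omega),
      card_erase_of_mem (by simp only [mem_Ioo, Fin.lt_def, Fin.val_zero]; omega), Fin.card_Ioo]
    congr 2
  have hincl := measureReal_union_add_inter (μ := thMeasure N 2) (s := relayEvent z (Ioc j i))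
    (measurableSet_relayEvent z (Ioo 0 j ∪ Icc i z))
  calc _ = (thMeasure N 2).real (relayEvent z (Ioc j i) ∪ relayEvent z (Ioo 0 j ∪ Icc i z)) := by
        linarith
    _ ≤ _ := le_pLTM_of_ae <| ae_thresholds_mem_Ioo.mono fun μ hμ =>
        mem_ltmSS_permNet_OR_of_mem_relayEvent hN hji hi hz fun a k => (hμ a k).2

lemma le_pLTM_permNet_OR (hN : 3 ≤ N) (hj1 : 0 < j.val) (hj2 : j.val + 3 ≤ N) (hi1 : 0 < i.val)
    (hi2 : i.val + 3 ≤ N) (hij : i ≠ j) :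
    (3 / 4 : ℝ) ^ Nat.dist i.val j.val +
        1 / 2 * (3 / 4 : ℝ) ^ (N - Nat.dist i.val j.val - 3) - 1 / 2 * (3 / 4 : ℝ) ^ (N - 4) ≤
      pLTM (permNet N) (fun _ => Protocol.OR) {j} i := by
  rcases Nat.lt_or_gt_of_ne (Fin.val_ne_of_ne hij.symm) with h | h
  · rw [Nat.dist_eq_sub_of_le_right h.le]
    exact le_pLTM_permNet_OR_of_lt hN hj1 h hi2
  · rw [Nat.dist_eq_sub_of_le h.le, pLTM_permNet_permFlip hN]
    have hi := permFlip_val_of_add_two_le (a := i) (by omega)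
    have hj := permFlip_val_of_add_two_le (a := j) (by omega)
    have := le_pLTM_permNet_OR_of_lt hN (i := permFlip N i) (j := permFlip N j) (by omega)
      (by omega) (by omega)
    rwa [hi, hj, show N - 2 - i.val - (N - 2 - j.val) = j.val - i.val by omega] at this

end PermutationNetwork

lemma half_pows_lt_three_quarter_pows {d : ℕ} (hd : 2 ≤ d) (s : ℕ) :
    (1 / 2 : ℝ) ^ d + (1 / 2) ^ (s + 5) + (1 / 2) ^ (d + s + 3) <
      (3 / 4) ^ d + 1 / 2 * (3 / 4) ^ (s + 2) - 1 / 2 * (3 / 4) ^ (d + s) := by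
  obtain ⟨p, rfl⟩ := Nat.exists_eq_add_of_le hd
  have hx : (0 : ℝ) < (1 / 2) ^ p := by positivity
  have hy : (0 : ℝ) < (1 / 2) ^ s := by positivity
  have hxu : (1 / 2 : ℝ) ^ p ≤ (3 / 4) ^ p := pow_le_pow_left₀ (by norm_num) (by norm_num) p
  have hyb : (1 / 2 : ℝ) ^ s ≤ (3 / 4) ^ s := pow_le_pow_left₀ (by norm_num) (by norm_num) s
  have hb : (3 / 4 : ℝ) ^ s ≤ 1 := pow_le_one₀ (by norm_num) (by norm_num)
  have hx1 : (1 / 2 : ℝ) ^ p ≤ 1 := pow_le_one₀ (by norm_num) (by norm_num)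
  have hu : (0 : ℝ) ≤ (3 / 4) ^ p := by positivity
  simp only [pow_add]
  nlinarith [mul_le_mul_of_nonneg_left hb hu, mul_le_mul_of_nonneg_right hx1 hy.le]

/-- protocol ordering on the permutation network: for `N ≥ 7`,
seed `{j}`, and indices as in Statements 10–12,
ℙ^{𝒢_P, OR}(i) > ℙ^{G_C}(i) > ℙ^{𝒢_P, AND}(i); equivalently, with `d = |i−j|`,
(3/4)^d + (1/2)(3/4)^{N−d−3} − (1/2)(3/4)^{N−5} > (1/2)^d + (1/2)^{N−d} > (1/4)^d. -/
theorem permutation_ordering (N : ℕ) (hN : 7 ≤ N) (u : Fin N → Protocol)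
    (i j : Fin N)
    (hi1 : 2 ≤ i.val) (hi2 : i.val ≤ N - 4)
    (hj1 : 1 ≤ j.val) (hj2 : j.val ≤ N - 3)
    (hd : 2 ≤ Nat.dist i.val j.val) :
    (pLTM (fun k : Fin 2 => if k = 0 then pathW N else permW2 N)
        (fun _ => Protocol.OR) {j} i >
      pLTM (fun _ : Fin 1 => cycleW N) u {j} i ∧
     pLTM (fun _ : Fin 1 => cycleW N) u {j} i >
      pLTM (fun k : Fin 2 => if k = 0 then pathW N else permW2 N)
        (fun _ => Protocol.AND) {j} i) ∧
    ((3/4 : ℝ) ^ (Nat.dist i.val j.val) +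
        (1/2 : ℝ) * (3/4 : ℝ) ^ (N - Nat.dist i.val j.val - 3) -
        (1/2 : ℝ) * (3/4 : ℝ) ^ (N - 5) >
      (1/2 : ℝ) ^ (Nat.dist i.val j.val) +
        (1/2 : ℝ) ^ (N - Nat.dist i.val j.val) ∧
     (1/2 : ℝ) ^ (Nat.dist i.val j.val) +
        (1/2 : ℝ) ^ (N - Nat.dist i.val j.val) >
      (1/4 : ℝ) ^ (Nat.dist i.val j.val)) := by
  have : NeZero N := ⟨by omega⟩
  have hdN : Nat.dist i.val j.val + 5 ≤ N := by unfold Nat.dist; omega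
  have hij : i ≠ j := by rintro rfl; simp at hd
  have hOR := le_pLTM_permNet_OR (by omega) hj1 (by omega) (by omega) (by omega) hij
  have hAND := pLTM_permNet_AND_le_dist (i := i) (j := j) (by omega) (by omega) (by omega)
    (by omega)
  obtain ⟨hcyc_ge, hcyc_le⟩ := pLTM_cycle_bounds u hij
  set d := Nat.dist i.val j.val
  obtain ⟨s, hs⟩ : ∃ s, N = d + s + 5 := ⟨N - d - 5, by omega⟩
  have key := half_pows_lt_three_quarter_pows hd s
  rw [show N - d - 3 = s + 2 by omega, show N - 4 = d + s + 1 by omega] at hOR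
  rw [show N - d = s + 5 by omega, show N - 2 = d + s + 3 by omega] at hcyc_le
  rw [show N - d - 3 = s + 2 by omega, show N - d = s + 5 by omega, show N - 5 = d + s by omega]
  have h45 : (3 / 4 : ℝ) ^ (d + s + 1) ≤ (3 / 4) ^ (d + s) :=
    pow_le_pow_of_le_one (by norm_num) (by norm_num) (by omega)
  have hquarter : (1 / 4 : ℝ) ^ d < (1 / 2) ^ d :=
    pow_lt_pow_left₀ (by norm_num) (by norm_num) (by omega)
  have hpos : (0 : ℝ) < (1 / 2) ^ (d + s + 3) := by positivity
  have hpos' : (0 : ℝ) < (1 / 2) ^ (s + 5) := by positivity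
  exact ⟨⟨by linarith, by linarith⟩, by linarith, by linarith⟩
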